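/- arXiv:1608.04858 — 2 statements merged into one kernel-verified Lean document; each statement's English description precedes it below -/
import Mathlib

section
/- Let q be a real number with q > 0 and q ≠ 1, let w₁, w₂ be positive integers, and let (β_{n,q^{w₁}})_{n≥0} and (β_{n,q^{w₂}})_{n≥0} be the Carlitz Bernoulli numbers for parameters q^{w₁} and q^{w₂} respectively. Then for every n ≥ 0 and every real x, [w₁]_q^{n−1} · Σ_{j=0}^{w₁−1} q^{w₂ j} · β_{n,q^{w₁}}(w₂x + (w₂/w₁)j) = [w₂]_q^{n−1} · Σ_{j=0}^{w₂−1} q^{w₁ j} · β_{n,q^{w₂}}(w₁x + (w₁/w₂)j). -/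
/-- The `q`-number `[y]_q = (1 - q^y)/(1 - q)`, using the real power `q ^ y`. -/
noncomputable def qnum (q y : ℝ) : ℝ := (1 - q ^ y) / (1 - q)

/-- `β` satisfies the Carlitz recurrence for parameter `Q`:
`β₀ = 1` and `Q(Qβ+1)^n - β_n = 1` if `n = 1`, `= 0` if `n > 1`. -/
def CarlitzRec (Q : ℝ) (β : ℕ → ℝ) : Prop :=
  β 0 = 1 ∧ ∀ n : ℕ, 1 ≤ n →
    Q * (∑ l ∈ Finset.range (n + 1), (n.choose l : ℝ) * Q ^ l * β l) - β n =
      if n = 1 then 1 else 0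

/-- The Carlitz `Q`-Bernoulli polynomial `β_{n,Q}(x) = Σ_l C(n,l) [x]_Q^{n-l} Q^{lx} β_l`. -/
noncomputable def carlitzPoly (Q : ℝ) (β : ℕ → ℝ) (n : ℕ) (x : ℝ) : ℝ :=
  ∑ l ∈ Finset.range (n + 1),
    (n.choose l : ℝ) * qnum Q x ^ (n - l) * Q ^ ((l : ℝ) * x) * β l

/-!
The recurrence determines the Carlitz numbers, and it is solved by the closed form
`β_{n,Q} = (1 - Q)⁻ⁿ ∑ᵢ C(n,i) (-1)ⁱ (i + 1) / [i + 1]_Q`. Substituting it into `β_{n,Q}(x)`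
and collapsing the double binomial sum gives
`β_{n,Q}(x) = (1 - Q)⁻ⁿ ∑ᵢ C(n,i) (-1)ⁱ (i + 1) / [i + 1]_Q · Q^{ix}`.
For `Q = q^{w₁}` at the point `w₂x + (w₂/w₁)j`, the sum over `j` is then a geometric sum in
`q^{w₂(i+1)}`, and each side of the identity becomes
`(1 - q)⁻ⁿ ∑ᵢ C(n,i) (-1)ⁱ (i + 1) q^{w₁w₂xi} [w₁w₂(i+1)]_q / ([w₁(i+1)]_q [w₂(i+1)]_q)`,
which is symmetric in `w₁` and `w₂`.
-/

open Finset

lemma pow_ne_one_of_pos_of_ne_one {Q : ℝ} (hQ0 : 0 < Q) (hQ1 : Q ≠ 1) {k : ℕ} (hk : k ≠ 0) :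
    Q ^ k ≠ 1 :=
  (pow_eq_one_iff_of_nonneg hQ0.le hk).not.2 hQ1

lemma one_sub_pow_ne_zero {Q : ℝ} (hQ0 : 0 < Q) (hQ1 : Q ≠ 1) {k : ℕ} (hk : k ≠ 0) :
    1 - Q ^ k ≠ 0 :=
  sub_ne_zero.2 (pow_ne_one_of_pos_of_ne_one hQ0 hQ1 hk).symm

lemma sum_choose_mul_pow_mul_sum_choose {R : Type*} [CommSemiring R] (a : ℕ → R) (u v : R)
    (n : ℕ) :
    ∑ l ∈ range (n + 1), (n.choose l : R) * u ^ l * v ^ (n - l) *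
        ∑ i ∈ range (l + 1), (l.choose i : R) * a i =
      ∑ i ∈ range (n + 1), (n.choose i : R) * a i * u ^ i * (u + v) ^ (n - i) := by
  calc _ = ∑ l ∈ range (n + 1), ∑ i ∈ range (l + 1),
        (n.choose l : R) * u ^ l * v ^ (n - l) * ((l.choose i : R) * a i) := by
          simp_rw [mul_sum]
    _ = ∑ i ∈ range (n + 1), ∑ l ∈ Ico i (n + 1),
        (n.choose l : R) * u ^ l * v ^ (n - l) * ((l.choose i : R) * a i) :=
          sum_comm' fun l i => by simp only [mem_range, mem_Ico]; omega
    _ = ∑ i ∈ range (n + 1), (n.choose i : R) * a i * u ^ i *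
        ∑ k ∈ range (n - i + 1), u ^ k * v ^ (n - i - k) * ((n - i).choose k : R) := by
          refine sum_congr rfl fun i _ => ?_
          rw [sum_Ico_eq_sum_range, show n + 1 - i = n - i + 1 by grind, mul_sum]
          refine sum_congr rfl fun k _ => ?_
          have hchoose : (n.choose (i + k) : R) * ((i + k).choose i : R) =
              n.choose i * (n - i).choose k := by
            have h := Nat.choose_mul (n := n) (Nat.le_add_right i k)
            rw [Nat.add_sub_cancel_left] at h
            rw [← Nat.cast_mul, ← Nat.cast_mul, h]
          calc _ = (n.choose (i + k) : R) * ((i + k).choose i : R) *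
                (a i * u ^ i * u ^ k * v ^ (n - (i + k))) := by ring
            _ = _ := by rw [hchoose, show n - (i + k) = n - i - k by omega]; ring
    _ = _ := by simp_rw [← add_pow]

lemma sum_range_choose_mul_neg_one_pow_mul_succ {R : Type*} [CommRing R] {n : ℕ} (hn : 2 ≤ n) :
    ∑ i ∈ range (n + 1), (n.choose i : R) * (-1) ^ i * (i + 1) = 0 := by
  obtain ⟨m, rfl⟩ : ∃ m, n = m + 1 := ⟨n - 1, by omega⟩
  have alt : ∀ k ≠ 0, ∑ i ∈ range (k + 1), (k.choose i : R) * (-1) ^ i = 0 := fun k hk => by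
    simpa [mul_comm] using congrArg (Int.cast : ℤ → R) (Int.alternating_sum_range_choose_of_ne hk)
  -- `(i + 1) * C(m + 1, i + 1) = (m + 1) * C(m, i)` reduces the weighted sum to an unweighted one.
  have weighted : ∑ i ∈ range (m + 1 + 1), ((m + 1).choose i : R) * (-1) ^ i * i = 0 := by
    rw [sum_range_succ']
    have key : ∀ i, ((m + 1).choose (i + 1) : R) * (-1) ^ (i + 1) * ((i + 1 : ℕ) : R) =
        -(m + 1) * ((m.choose i : R) * (-1) ^ i) := fun i => by
      have h := congrArg (Nat.cast : ℕ → R) (Nat.add_one_mul_choose_eq m i)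
      push_cast at h ⊢
      linear_combination ((-1 : R) ^ i) * h
    simp only [key, ← mul_sum, alt m (by omega), Nat.cast_zero, mul_zero, add_zero]
  calc _ = ∑ i ∈ range (m + 1 + 1), ((m + 1).choose i : R) * (-1) ^ i * i
        + ∑ i ∈ range (m + 1 + 1), ((m + 1).choose i : R) * (-1) ^ i := by
          rw [← sum_add_distrib]; exact sum_congr rfl fun i _ => by ring
    _ = 0 := by rw [weighted, alt _ (by omega), add_zero]

/-- `carlitzCoeff Q i = (i + 1) / [i + 1]_Q`. -/
noncomputable def carlitzCoeff (Q : ℝ) (i : ℕ) : ℝ := (i + 1) * (1 - Q) / (1 - Q ^ (i + 1))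

noncomputable def carlitzBernoulli (Q : ℝ) (n : ℕ) : ℝ :=
  ((1 - Q) ^ n)⁻¹ * ∑ i ∈ range (n + 1), (n.choose i : ℝ) * ((-1) ^ i * carlitzCoeff Q i)

lemma sum_choose_mul_carlitzBernoulli {Q : ℝ} (hQ1 : Q ≠ 1) (n : ℕ) (u : ℝ) :
    ∑ l ∈ range (n + 1),
        (n.choose l : ℝ) * ((1 - u) / (1 - Q)) ^ (n - l) * u ^ l * carlitzBernoulli Q l =
      ((1 - Q) ^ n)⁻¹ *
        ∑ i ∈ range (n + 1), (n.choose i : ℝ) * (-1) ^ i * carlitzCoeff Q i * u ^ i := by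
  have hQ : (1 : ℝ) - Q ≠ 0 := sub_ne_zero.2 hQ1.symm
  have hterm : ∀ l ∈ range (n + 1),
      (n.choose l : ℝ) * ((1 - u) / (1 - Q)) ^ (n - l) * u ^ l * carlitzBernoulli Q l =
        ((1 - Q) ^ n)⁻¹ * ((n.choose l : ℝ) * u ^ l * (1 - u) ^ (n - l) *
          ∑ i ∈ range (l + 1), (l.choose i : ℝ) * ((-1) ^ i * carlitzCoeff Q i)) := by
    intro l hl
    rw [carlitzBernoulli, div_pow, ← pow_sub_mul_pow (1 - Q) (Nat.lt_succ_iff.1 (mem_range.1 hl))]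
    field_simp
  rw [sum_congr rfl hterm, ← mul_sum, sum_choose_mul_pow_mul_sum_choose, add_sub_cancel]
  exact congrArg _ (sum_congr rfl fun i _ => by ring)

lemma carlitzPoly_eq_sum {Q : ℝ} (hQ : 0 < Q) (β : ℕ → ℝ) (n : ℕ) (x : ℝ) :
    carlitzPoly Q β n x = ∑ l ∈ range (n + 1),
      (n.choose l : ℝ) * ((1 - Q ^ x) / (1 - Q)) ^ (n - l) * (Q ^ x) ^ l * β l := by
  refine sum_congr rfl fun l _ => ?_
  rw [qnum, mul_comm (l : ℝ), Real.rpow_mul hQ.le, Real.rpow_natCast]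

lemma carlitzPoly_carlitzBernoulli {Q : ℝ} (hQ0 : 0 < Q) (hQ1 : Q ≠ 1) (n : ℕ) (x : ℝ) :
    carlitzPoly Q (carlitzBernoulli Q) n x = ((1 - Q) ^ n)⁻¹ *
      ∑ i ∈ range (n + 1), (n.choose i : ℝ) * (-1) ^ i * carlitzCoeff Q i * (Q ^ x) ^ i := by
  rw [carlitzPoly_eq_sum hQ0, sum_choose_mul_carlitzBernoulli hQ1]

lemma carlitzRec_carlitzBernoulli {Q : ℝ} (hQ0 : 0 < Q) (hQ1 : Q ≠ 1) :
    CarlitzRec Q (carlitzBernoulli Q) := by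
  have hQ : (1 : ℝ) - Q ≠ 0 := sub_ne_zero.2 hQ1.symm
  refine ⟨by simp [carlitzBernoulli, carlitzCoeff, div_self hQ], fun n hn => ?_⟩
  have hsum : ∑ l ∈ range (n + 1), (n.choose l : ℝ) * Q ^ l * carlitzBernoulli Q l =
      ((1 - Q) ^ n)⁻¹ *
        ∑ i ∈ range (n + 1), (n.choose i : ℝ) * (-1) ^ i * carlitzCoeff Q i * Q ^ i := by
    simpa [div_self hQ] using sum_choose_mul_carlitzBernoulli hQ1 n Q
  have hcoeff : ∀ i : ℕ,
      Q * (carlitzCoeff Q i * Q ^ i) - carlitzCoeff Q i = -(1 - Q) * (i + 1) := by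
    intro i
    have := one_sub_pow_ne_zero hQ0 hQ1 (Nat.succ_ne_zero i)
    rw [carlitzCoeff]
    field_simp
    ring
  calc _ = ((1 - Q) ^ n)⁻¹ * ∑ i ∈ range (n + 1),
        (n.choose i : ℝ) * (-1) ^ i * (Q * (carlitzCoeff Q i * Q ^ i) - carlitzCoeff Q i) := by
        rw [hsum, carlitzBernoulli, mul_left_comm, ← mul_sub, mul_sum, ← sum_sub_distrib]
        exact congrArg _ (sum_congr rfl fun i _ => by ring)
    _ = -((1 - Q) ^ n)⁻¹ * (1 - Q) *
        ∑ i ∈ range (n + 1), (n.choose i : ℝ) * (-1) ^ i * (i + 1) := by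
        simp_rw [hcoeff, mul_sum]
        exact sum_congr rfl fun i _ => by ring
    _ = if n = 1 then 1 else 0 := by
        obtain rfl | hn2 := hn.eq_or_lt
        · simp [sum_range_succ, hQ]
        · rw [sum_range_choose_mul_neg_one_pow_mul_succ hn2, if_neg hn2.ne', mul_zero]

lemma CarlitzRec.eq {Q : ℝ} (hQ0 : 0 < Q) (hQ1 : Q ≠ 1) {β β' : ℕ → ℝ}
    (h : CarlitzRec Q β) (h' : CarlitzRec Q β') : β = β' := by
  funext n
  induction n using Nat.strong_induction_on with
  | _ n ih =>
    cases n with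
    | zero => rw [h.1, h'.1]
    | succ m =>
      -- In the recurrence at `m + 1`, `β (m + 1)` has the coefficient `Q ^ (m + 2) - 1 ≠ 0`.
      have e := h.2 (m + 1) (by omega)
      have e' := h'.2 (m + 1) (by omega)
      rw [sum_range_succ, Nat.choose_self, Nat.cast_one, one_mul] at e e'
      rw [sum_congr rfl fun l hl => by rw [ih l (mem_range.1 hl)]] at e
      refine mul_left_cancel₀ (one_sub_pow_ne_zero hQ0 hQ1 (k := m + 2) (by omega)) ?_
      linear_combination e' - e

lemma CarlitzRec.eq_carlitzBernoulli {Q : ℝ} (hQ0 : 0 < Q) (hQ1 : Q ≠ 1) {β : ℕ → ℝ}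
    (h : CarlitzRec Q β) : β = carlitzBernoulli Q :=
  h.eq hQ0 hQ1 (carlitzRec_carlitzBernoulli hQ0 hQ1)

lemma qnum_zpow_mul_inv_pow_mul {q : ℝ} (hq1 : q ≠ 1) {w : ℕ} (hw : q ^ w ≠ 1) (n : ℕ) :
    qnum q w ^ ((n : ℤ) - 1) * (((1 - q ^ w) ^ n)⁻¹ * (1 - q ^ w)) =
      ((1 - q) ^ ((n : ℤ) - 1))⁻¹ := by
  have ha : (1 : ℝ) - q ^ w ≠ 0 := sub_ne_zero.2 hw.symm
  have hb : (1 : ℝ) - q ≠ 0 := sub_ne_zero.2 hq1.symm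
  rw [qnum, Real.rpow_natCast]
  cases n with
  | zero => simp [ha]
  | succ m =>
    rw [Nat.cast_succ, add_sub_cancel_right, zpow_natCast, zpow_natCast, div_pow]
    field_simp
    ring

lemma qnum_zpow_mul_sum_carlitzPoly {q : ℝ} (hq : 0 < q) (hq1 : q ≠ 1) {w w' : ℕ}
    (hw : 0 < w) (hw' : 0 < w') (n : ℕ) (x : ℝ) :
    qnum q w ^ ((n : ℤ) - 1) * ∑ j ∈ range w,
        q ^ (w' * j) * carlitzPoly (q ^ w) (carlitzBernoulli (q ^ w)) n
          ((w' : ℝ) * x + ((w' : ℝ) / w) * j) =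
      ((1 - q) ^ ((n : ℤ) - 1))⁻¹ * ∑ i ∈ range (n + 1),
        (n.choose i : ℝ) * (-1) ^ i * (i + 1) * (q ^ ((w : ℝ) * w' * x)) ^ i *
          ((1 - q ^ (w * w' * (i + 1))) /
            ((1 - q ^ (w * (i + 1))) * (1 - q ^ (w' * (i + 1))))) := by
  set A := q ^ ((w : ℝ) * w' * x)
  have hbase : ∀ j : ℕ, (q ^ w) ^ ((w' : ℝ) * x + ((w' : ℝ) / w) * j) = A * q ^ (w' * j) := by
    intro j
    rw [← Real.rpow_natCast q w, ← Real.rpow_mul hq.le, ← Real.rpow_natCast q (w' * j),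
      ← Real.rpow_add hq]
    congr 1
    push_cast
    field_simp
  have hsummand : ∀ j ∈ range w,
      q ^ (w' * j) * carlitzPoly (q ^ w) (carlitzBernoulli (q ^ w)) n
          ((w' : ℝ) * x + ((w' : ℝ) / w) * j) =
        ((1 - q ^ w) ^ n)⁻¹ * ∑ i ∈ range (n + 1), (n.choose i : ℝ) * (-1) ^ i *
          carlitzCoeff (q ^ w) i * A ^ i * (q ^ (w' * (i + 1))) ^ j := by
    intro j _
    rw [carlitzPoly_carlitzBernoulli (pow_pos hq w) (pow_ne_one_of_pos_of_ne_one hq hq1 hw.ne'),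
      hbase, mul_left_comm, mul_sum]
    refine congrArg _ (sum_congr rfl fun i _ => ?_)
    simp only [mul_pow, ← pow_mul]
    ring
  have hgeom : ∀ i : ℕ, ∑ j ∈ range w, (q ^ (w' * (i + 1))) ^ j =
      (1 - q ^ (w * w' * (i + 1))) / (1 - q ^ (w' * (i + 1))) := by
    intro i
    refine eq_div_of_mul_eq (one_sub_pow_ne_zero hq hq1 (by positivity)) ?_
    rw [geom_sum_mul_neg, ← pow_mul]
    ring
  rw [sum_congr rfl hsummand, ← mul_sum, sum_comm]
  simp_rw [← mul_sum, hgeom]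
  rw [← qnum_zpow_mul_inv_pow_mul hq1 (pow_ne_one_of_pos_of_ne_one hq hq1 hw.ne') n, mul_assoc,
    mul_assoc]
  refine congrArg _ (congrArg _ ?_)
  rw [mul_sum]
  refine sum_congr rfl fun i _ => ?_
  rw [carlitzCoeff, ← pow_mul, div_mul_eq_div_div_swap]
  ring

theorem carlitz_symmetric (q : ℝ) (hq : 0 < q) (hq1 : q ≠ 1)
    (w₁ w₂ : ℕ) (hw₁ : 0 < w₁) (hw₂ : 0 < w₂)
    (β₁ β₂ : ℕ → ℝ) (h1 : CarlitzRec (q ^ w₁) β₁) (h2 : CarlitzRec (q ^ w₂) β₂) :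
    ∀ (n : ℕ) (x : ℝ),
      qnum q w₁ ^ ((n : ℤ) - 1) *
          ∑ j ∈ Finset.range w₁,
            q ^ (w₂ * j) * carlitzPoly (q ^ w₁) β₁ n ((w₂ : ℝ) * x + ((w₂ : ℝ) / w₁) * j) =
        qnum q w₂ ^ ((n : ℤ) - 1) *
          ∑ j ∈ Finset.range w₂,
            q ^ (w₁ * j) * carlitzPoly (q ^ w₂) β₂ n ((w₁ : ℝ) * x + ((w₁ : ℝ) / w₂) * j) := by
  intro n x
  obtain rfl := h1.eq_carlitzBernoulli (pow_pos hq w₁) (pow_ne_one_of_pos_of_ne_one hq hq1 hw₁.ne')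
  obtain rfl := h2.eq_carlitzBernoulli (pow_pos hq w₂) (pow_ne_one_of_pos_of_ne_one hq hq1 hw₂.ne')
  rw [qnum_zpow_mul_sum_carlitzPoly hq hq1 hw₁ hw₂, qnum_zpow_mul_sum_carlitzPoly hq hq1 hw₂ hw₁]
  refine congrArg _ (sum_congr rfl fun i _ => ?_)
  rw [mul_comm (w₁ : ℝ), mul_comm w₁ w₂, mul_comm (1 - q ^ (w₁ * (i + 1)))]
end

section
/- Let r be a positive integer, λ a real number, and w a positive integer. For each real parameter μ and real y, let (B_{n,μ}^{(r)}(y))_{n≥0} be the higher-order degenerate Bernoulli polynomial values, i.e. the reals determined by (Σ_{n≥0} B_{n,μ}^{(r)}(y) tⁿ/n!)·(exp(L_μ(t)) − 1)^r = L_μ(t)^r·exp(y·L_μ(t)) in ℝ[[t]]. Then for every n ≥ 0 and every real x, B_{n,λ}^{(r)}(wx) = w^{n−r} · Σ_{j₁,…,j_r=0}^{w−1} B_{n,λ/w}^{(r)}(x + (j₁+⋯+j_r)/w). -/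
/-!
Substituting `t ↦ w t` turns `L_{λ/w}` into `w L_λ`. Hence, with `E = exp(L_λ)`, the defining
identity at parameter `λ/w` and argument `x + (j₁ + ⋯ + j_r)/w`, rescaled, has the factor
`(E^w - 1)^r` on the left and `E^(j₁ + ⋯ + j_r)` on the right. Summing over `j` produces
`(1 + E + ⋯ + E^(w-1))^r`, which times `(E - 1)^r` is `(E^w - 1)^r`, so the right-hand side becomes
`w^r` times the defining identity at `λ`, `w x`. Cancelling `(E^w - 1)^r` in the domain `ℝ[[t]]`
and comparing coefficients of `tⁿ` gives the formula.
-/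

/-- `L_λ(t) = Σ_{k≥1} (-1)^(k-1) λ^(k-1) t^k / k`, the formal series of `(1/λ)log(1+λt)`. -/
noncomputable def Lser (lam : ℝ) : PowerSeries ℝ :=
  PowerSeries.mk fun k => if k = 0 then 0 else (-1) ^ (k - 1) * lam ^ (k - 1) / k

/-- The formal exponential `Σ_{m≥0} S^m/m!` of a power series `S` with zero constant term;
since `coeff n (S^m) = 0` for `m > n`, each coefficient is the finite sum below. -/
noncomputable def expPS (S : PowerSeries ℝ) : PowerSeries ℝ :=
  PowerSeries.mk fun n =>
    ∑ m ∈ Finset.range (n + 1), (PowerSeries.coeff n (S ^ m)) / m.factorial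

open PowerSeries Finset

theorem PowerSeries.coeff_pow_eq_zero_of_lt {R : Type*} [CommSemiring R] {S : PowerSeries R}
    (hS : constantCoeff S = 0) {m n : ℕ} (h : n < m) : coeff n (S ^ m) = 0 :=
  coeff_of_lt_order n <| (Nat.cast_lt.2 h).trans_le (le_order_pow_of_constantCoeff_eq_zero m hS)

theorem sum_pow_sum_mul_sub_one_pow {R : Type*} [CommRing R] (a : R) (r w : ℕ) :
    (∑ j : Fin r → Fin w, a ^ ∑ l, (j l : ℕ)) * (a - 1) ^ r = (a ^ w - 1) ^ r := by
  rw [← geom_sum_mul, mul_pow, Fin.sum_univ_eq_sum_range (a ^ ·) w |>.symm, Fintype.sum_pow]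
  simp only [prod_pow_eq_pow_sum]

section expPS

variable {S : PowerSeries ℝ}

theorem expPS_eq_subst (hS : constantCoeff S = 0) : expPS S = (exp ℝ).subst S := by
  ext n
  rw [coeff_subst' (HasSubst.of_constantCoeff_zero' hS), finsum_eq_sum_of_support_subset
    (s := range (n + 1)), expPS, coeff_mk]
  · refine sum_congr rfl fun m _ => ?_
    rw [coeff_exp, smul_eq_mul]
    simp [div_eq_inv_mul]
  · intro m hm
    by_contra h
    simp only [coe_range, Set.mem_Iio, not_lt] at h
    exact hm (by simp only [coeff_pow_eq_zero_of_lt hS (by omega : n < m), smul_zero])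

theorem expPS_C_mul_eq_subst_rescale (hS : constantCoeff S = 0) (a : ℝ) :
    expPS (C a * S) = (rescale a (exp ℝ)).subst S := by
  have hS' := HasSubst.of_constantCoeff_zero' hS
  rw [expPS_eq_subst (by simp [hS]), rescale_eq_subst,
    subst_comp_subst_apply (HasSubst.smul_X' a) hS', subst_smul hS', subst_X hS', smul_eq_C_mul]

theorem expPS_C_mul_mul_expPS_C_mul (hS : constantCoeff S = 0) (a b : ℝ) :
    expPS (C a * S) * expPS (C b * S) = expPS (C (a + b) * S) := by
  simp only [expPS_C_mul_eq_subst_rescale hS, ← subst_mul (HasSubst.of_constantCoeff_zero' hS),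
    exp_mul_exp_eq_exp_add]

theorem expPS_natCast_mul (hS : constantCoeff S = 0) (k : ℕ) :
    expPS (C (k : ℝ) * S) = expPS S ^ k := by
  rw [expPS_C_mul_eq_subst_rescale hS, ← exp_pow_eq_rescale_exp,
    subst_pow (HasSubst.of_constantCoeff_zero' hS), expPS_eq_subst hS]

theorem coeff_one_expPS : coeff 1 (expPS S) = coeff 1 S := by
  simp [expPS, sum_range_succ, coeff_one]

theorem rescale_expPS (c : ℝ) :
    rescale c (expPS S) = expPS (rescale c S) := by
  ext n
  simp only [expPS, coeff_rescale, coeff_mk, mul_sum, ← map_pow, mul_div_assoc]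

end expPS

theorem rescale_C_mul {R : Type*} [CommSemiring R] (c a : R) (f : PowerSeries R) :
    rescale c (C a * f) = C a * rescale c f := by
  ext n
  simp only [coeff_rescale, coeff_C_mul]
  ring

theorem constantCoeff_Lser (lam : ℝ) : constantCoeff (Lser lam) = 0 := by
  simp [Lser]

theorem rescale_Lser_div (lam : ℝ) {w : ℝ} (hw : w ≠ 0) :
    rescale w (Lser (lam / w)) = C w * Lser lam := by
  ext k
  rw [coeff_rescale, coeff_C_mul]
  simp only [Lser, coeff_mk]
  rcases k with _ | k
  · simp
  · simp only [Nat.add_one_ne_zero, if_false, Nat.add_sub_cancel, div_pow, pow_succ]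
    field_simp

theorem rescale_expPS_C_mul_Lser_div (lam y : ℝ) {w : ℝ} (hw : w ≠ 0) :
    rescale w (expPS (C y * Lser (lam / w))) = expPS (C (w * y) * Lser lam) := by
  rw [rescale_expPS, rescale_C_mul, rescale_Lser_div lam hw, ← mul_assoc, ← map_mul, mul_comm y]

theorem sum_rescale_eq_C_pow_mul {r : ℕ} {F : ℝ → ℝ → PowerSeries ℝ}
    (hF : ∀ μ y, F μ y * (expPS (Lser μ) - 1) ^ r = Lser μ ^ r * expPS (C y * Lser μ))
    (lam x : ℝ) {w : ℕ} (hw : w ≠ 0) :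
    ∑ j : Fin r → Fin w, rescale (w : ℝ) (F (lam / w) (x + (∑ l, ((j l : ℕ) : ℝ)) / w)) =
      C ((w : ℝ) ^ r) * F lam (w * x) := by
  have hw' : (w : ℝ) ≠ 0 := Nat.cast_ne_zero.2 hw
  have hL := constantCoeff_Lser lam
  set E := expPS (Lser lam)
  have hE : rescale (w : ℝ) (expPS (Lser (lam / w))) = E ^ w := by
    have h := rescale_expPS_C_mul_Lser_div lam 1 hw'
    rwa [map_one, one_mul, mul_one, expPS_natCast_mul hL] at h
  have hne : (E ^ w - 1) ^ r ≠ 0 := by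
    refine pow_ne_zero r fun h => hw' ?_
    have h1 := congrArg (coeff 1) h
    rw [← expPS_natCast_mul hL, map_sub, coeff_one_expPS, coeff_C_mul] at h1
    simpa [Lser] using h1
  have hterm : ∀ y, rescale (w : ℝ) (F (lam / w) y) * (E ^ w - 1) ^ r =
      C ((w : ℝ) ^ r) * Lser lam ^ r * expPS (C (w * y) * Lser lam) := by
    intro y
    rw [← hE, ← map_one (rescale _), ← map_sub, ← map_pow, ← map_mul, hF, map_mul, map_pow,
      rescale_Lser_div lam hw', rescale_expPS_C_mul_Lser_div lam y hw', mul_pow, map_pow]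
  refine mul_right_cancel₀ hne ?_
  calc (∑ j : Fin r → Fin w, rescale (w : ℝ) (F (lam / w) (x + (∑ l, ((j l : ℕ) : ℝ)) / w))) *
        (E ^ w - 1) ^ r
      = C ((w : ℝ) ^ r) * (Lser lam ^ r * expPS (C (w * x) * Lser lam)) *
          ∑ j : Fin r → Fin w, E ^ ∑ l, (j l : ℕ) := by
        rw [sum_mul, mul_sum]
        refine sum_congr rfl fun j _ => ?_
        rw [hterm, mul_add, mul_div_cancel₀ _ hw', ← expPS_C_mul_mul_expPS_C_mul hL, ← Nat.cast_sum,
          expPS_natCast_mul hL]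
        ring
    _ = C ((w : ℝ) ^ r) * F lam (w * x) * (E ^ w - 1) ^ r := by
        rw [← hF, ← sum_pow_sum_mul_sub_one_pow]
        ring

theorem higher_degenerate_bernoulli_multiplication_general (r : ℕ) (lam : ℝ)
    (w : ℕ) (hw : 0 < w) (B : ℝ → ℝ → ℕ → ℝ)
    (hB : ∀ μ y : ℝ,
      (PowerSeries.mk fun n => B μ y n / n.factorial) * (expPS (Lser μ) - 1) ^ r =
        Lser μ ^ r * expPS (PowerSeries.C y * Lser μ)) :
    ∀ (n : ℕ) (x : ℝ),
      B lam ((w : ℝ) * x) n =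
        (w : ℝ) ^ ((n : ℤ) - r) *
          ∑ j : Fin r → Fin w, B (lam / w) (x + (∑ l, ((j l : ℕ) : ℝ)) / w) n := by
  intro n x
  have hw' : (w : ℝ) ≠ 0 := by positivity
  have h := congrArg (coeff n) (sum_rescale_eq_C_pow_mul hB lam x hw.ne')
  simp only [map_sum, coeff_rescale, coeff_C_mul, coeff_mk, ← mul_sum, ← sum_div] at h
  rw [zpow_sub₀ hw', zpow_natCast, zpow_natCast]
  field_simp at h ⊢
  linarith

theorem higher_degenerate_bernoulli_multiplication (r : ℕ) (hr : 0 < r) (lam : ℝ)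
    (w : ℕ) (hw : 0 < w) (B : ℝ → ℝ → ℕ → ℝ)
    (hB : ∀ μ y : ℝ,
      (PowerSeries.mk fun n => B μ y n / n.factorial) * (expPS (Lser μ) - 1) ^ r =
        Lser μ ^ r * expPS (PowerSeries.C y * Lser μ)) :
    ∀ (n : ℕ) (x : ℝ),
      B lam ((w : ℝ) * x) n =
        (w : ℝ) ^ ((n : ℤ) - r) *
          ∑ j : Fin r → Fin w, B (lam / w) (x + (∑ l, ((j l : ℕ) : ℝ)) / w) n :=
  higher_degenerate_bernoulli_multiplication_general r lam w hw B hB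
end
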